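/- Let M_0, M_1, M_2 be the explicit-scheme matrices defined in the context and M̃_2 := (1/β)M_2. If β > 0 and 0 < α_i < 1/(‖A_i‖_2² + 2‖M̃_2‖_2) for every i ∈ {1,…,s}, then the triple {M_0, M_1, M_2} satisfies Condition-M. -/

import Mathlib

open Matrix Filter Topology

noncomputable section

/-- Spectral norm (largest singular value) of a real matrix. -/
def specNorm {p q : Type*} [Fintype p] [Fintype q] [DecidableEq q]
    (M : Matrix p q ℝ) : ℝ :=
  ‖LinearMap.toContinuousLinearMap (Matrix.toEuclideanLin M)‖

/-- The positive semidefinite square root of a positive semidefinite matrix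
(the definition `Matrix.PosSemidef.sqrt` of the older Mathlib, since removed). -/
def Matrix.PosSemidef.sqrt {n : Type*} [Fintype n] [DecidableEq n]
    {A : Matrix n n ℝ} (hA : A.PosSemidef) : Matrix n n ℝ :=
  hA.1.eigenvectorUnitary.1 * diagonal ((↑) ∘ (√·) ∘ hA.1.eigenvalues) *
  (star hA.1.eigenvectorUnitary : Matrix n n ℝ)

/-- Condition-M for a triple of matrices: `M0 = M1 + M2`, `H := M0 + M2` is symmetric
positive definite, and `‖H^{-1/2} M2 H^{-1/2}‖₂ < 1/2` (here `H^{-1/2}` is the positive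
semidefinite square root of `H⁻¹`). -/
def ConditionM {d : Type*} [Fintype d] [DecidableEq d] (M0 M1 M2 : Matrix d d ℝ) : Prop :=
  M0 = M1 + M2 ∧ ∃ hH : (M0 + M2).PosDef,
    specNorm (hH.inv.posSemidef.sqrt * M2 * hH.inv.posSemidef.sqrt) < 1 / 2

/-- The cost functional defining the proximity operator `prox_{φ,H}` at input `x`. -/
def proxCost {ι : Type*} [Fintype ι] (φ : (ι → ℝ) → EReal) (H : Matrix ι ι ℝ)
    (x u : ι → ℝ) : EReal :=
  ((((1 : ℝ) / 2) * ((u - x) ⬝ᵥ H.mulVec (u - x)) : ℝ) : EReal) + φ u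

/-- `p = prox_{φ,H}(x)`: `p` is the unique minimizer of the prox cost. -/
def IsProx {ι : Type*} [Fintype ι] (φ : (ι → ℝ) → EReal) (H : Matrix ι ι ℝ)
    (x p : ι → ℝ) : Prop :=
  (∀ u, proxCost φ H x p ≤ proxCost φ H x u) ∧
  ∀ q, (∀ u, proxCost φ H x q ≤ proxCost φ H x u) → q = p

/-- Proper lower semicontinuous convex extended-real-valued function. -/
def ProperConvexLsc {ι : Type*} [Fintype ι] (f : (ι → ℝ) → EReal) : Prop :=
  (∃ x, f x ≠ ⊤) ∧ (∀ x, f x ≠ ⊥) ∧ LowerSemicontinuous f ∧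
  ∀ x y : ι → ℝ, ∀ t : ℝ, 0 < t → t < 1 →
    f (t • x + (1 - t) • y) ≤ (t : EReal) * f x + ((1 - t : ℝ) : EReal) * f y

/-- Scaling of an extended-real-valued function by a real constant. -/
def smulF {V : Type*} (c : ℝ) (φ : V → EReal) : V → EReal := fun u => (c : EReal) * φ u

/-- The conjugate of the indicator of `C = {b}`: `ι_C*(y) = ⟨y, b⟩`. -/
def iotaCstar {m : ℕ} (b : Fin m → ℝ) : (Fin m → ℝ) → EReal :=
  fun y => ((y ⬝ᵥ b : ℝ) : EReal)

variable {s m : ℕ} {n : Fin s → ℕ}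

/-- Index type for the concatenated variable `x = (x_1, …, x_s)`. -/
abbrev XIdx (n : Fin s → ℕ) := (i : Fin s) × Fin (n i)

/-- Index type for the full variable `v = (x, y)`. -/
abbrev FIdx (n : Fin s → ℕ) (m : ℕ) := XIdx n ⊕ Fin m

/-- The `i`-th block of a concatenated vector. -/
def blk (x : XIdx n → ℝ) (i : Fin s) : Fin (n i) → ℝ := fun j => x ⟨i, j⟩

/-- The matrix `A = [A_1 … A_s]`. -/
def bigA (A : ∀ i : Fin s, Matrix (Fin m) (Fin (n i)) ℝ) : Matrix (Fin m) (XIdx n) ℝ :=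
  Matrix.of fun r p => A p.1 r p.2

/-- The separable objective `∑ f_i(x_i)`. -/
def objSum (f : ∀ i : Fin s, (Fin (n i) → ℝ) → EReal) (x : XIdx n → ℝ) : EReal :=
  ∑ i, f i (blk x i)

/-- `∑ A_i x_i`. -/
def sumAx (A : ∀ i : Fin s, Matrix (Fin m) (Fin (n i)) ℝ) (x : XIdx n → ℝ) : Fin m → ℝ :=
  ∑ i, (A i).mulVec (blk x i)

/-- `x` is a solution of problem (P). -/
def IsSolution (f : ∀ i : Fin s, (Fin (n i) → ℝ) → EReal)
    (A : ∀ i : Fin s, Matrix (Fin m) (Fin (n i)) ℝ) (b : Fin m → ℝ)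
    (x : XIdx n → ℝ) : Prop :=
  sumAx A x = b ∧ ∀ z : XIdx n → ℝ, sumAx A z = b → objSum f x ≤ objSum f z

/-- `b ∈ A(ri(dom(∑ f_i)))` where `ri` is the relative (intrinsic) interior. -/
def RiCond (f : ∀ i : Fin s, (Fin (n i) → ℝ) → EReal)
    (A : ∀ i : Fin s, Matrix (Fin m) (Fin (n i)) ℝ) (b : Fin m → ℝ) : Prop :=
  b ∈ (fun x => sumAx A x) '' intrinsicInterior ℝ {x : XIdx n → ℝ | objSum f x ≠ ⊤}

/-- The `x`-part of a full vector. -/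
def xpart (v : FIdx n m → ℝ) : XIdx n → ℝ := fun p => v (Sum.inl p)

/-- The `y`-part of a full vector. -/
def ypart (v : FIdx n m → ℝ) : Fin m → ℝ := fun r => v (Sum.inr r)

/-- The function `Φ(x_1,…,x_s,y) = ∑ f_i(x_i) + ι_C*(y)`. -/
def PhiFun (f : ∀ i : Fin s, (Fin (n i) → ℝ) → EReal) (b : Fin m → ℝ)
    (v : FIdx n m → ℝ) : EReal :=
  objSum f (xpart v) + iotaCstar b (ypart v)

/-- The diagonal matrix `R = diag((β/α_1)I, …, (β/α_s)I, (1/β)I)`. -/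
def Rmat (α : Fin s → ℝ) (β : ℝ) : Matrix (FIdx n m) (FIdx n m) ℝ :=
  Matrix.diagonal (Sum.elim (fun p : XIdx n => β / α p.1) fun _ => 1 / β)

/-- The inverse `R⁻¹` of the diagonal matrix `R`. -/
def Rinv (α : Fin s → ℝ) (β : ℝ) : Matrix (FIdx n m) (FIdx n m) ℝ :=
  Matrix.diagonal (Sum.elim (fun p : XIdx n => α p.1 / β) fun _ => β)

/-- The expansive matrix `E = [[I, −P⁻¹Aᵀ],[βA, I]]`. -/
def Emat (A : ∀ i : Fin s, Matrix (Fin m) (Fin (n i)) ℝ) (α : Fin s → ℝ) (β : ℝ) :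
    Matrix (FIdx n m) (FIdx n m) ℝ :=
  Matrix.fromBlocks 1 (-(Matrix.diagonal (fun p : XIdx n => α p.1 / β) * (bigA A)ᵀ))
    (β • bigA A) 1

/-- The skew-symmetric matrix `S_A = [[0, −Aᵀ],[A, 0]]`. -/
def SAmat (A : ∀ i : Fin s, Matrix (Fin m) (Fin (n i)) ℝ) :
    Matrix (FIdx n m) (FIdx n m) ℝ :=
  Matrix.fromBlocks 0 (-(bigA A)ᵀ) (bigA A) 0

/-- `w = 𝒯(v)`, where `𝒯(x_1,…,x_s,y) = (prox_{(α_1/β)f_1}x_1, …, prox_{(α_s/β)f_s}x_s,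
prox_{β ι_C*}y)`. -/
def isT (f : ∀ i : Fin s, (Fin (n i) → ℝ) → EReal) (b : Fin m → ℝ)
    (α : Fin s → ℝ) (β : ℝ) (v w : FIdx n m → ℝ) : Prop :=
  (∀ i, IsProx (smulF (α i / β) (f i)) 1 (blk (xpart v) i) (blk (xpart w) i)) ∧
  IsProx (smulF β (iotaCstar b)) 1 (ypart v) (ypart w)

/-- `w = T_ℳ(u₁, u₂)`, i.e. `w = 𝒯((E − R⁻¹M₀)w + R⁻¹M₁u₁ + R⁻¹M₂u₂)`. -/
def isTM (f : ∀ i : Fin s, (Fin (n i) → ℝ) → EReal)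
    (A : ∀ i : Fin s, Matrix (Fin m) (Fin (n i)) ℝ) (b : Fin m → ℝ)
    (α : Fin s → ℝ) (β : ℝ) (M0 M1 M2 : Matrix (FIdx n m) (FIdx n m) ℝ)
    (u1 u2 w : FIdx n m → ℝ) : Prop :=
  isT f b α β ((Emat A α β - Rinv α β * M0).mulVec w + (Rinv α β * M1).mulVec u1
    + (Rinv α β * M2).mulVec u2) w

/-- `T_ℳ` is well-defined. -/
def TMWellDefined (f : ∀ i : Fin s, (Fin (n i) → ℝ) → EReal)
    (A : ∀ i : Fin s, Matrix (Fin m) (Fin (n i)) ℝ) (b : Fin m → ℝ)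
    (α : Fin s → ℝ) (β : ℝ) (M0 M1 M2 : Matrix (FIdx n m) (FIdx n m) ℝ) : Prop :=
  ∀ u1 u2 : FIdx n m → ℝ, ∃! w, isTM f A b α β M0 M1 M2 u1 u2 w


/-- The matrix `M₂` (same for the implicit and explicit schemes): `(i,j)` block
`βA_iᵀA_j` for `i < j`, all other blocks zero. -/
def M2mat {s m : ℕ} {n : Fin s → ℕ} (A : ∀ i : Fin s, Matrix (Fin m) (Fin (n i)) ℝ)
    (β : ℝ) : Matrix (FIdx n m) (FIdx n m) ℝ :=
  Matrix.fromBlocks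
    (Matrix.of fun p q : XIdx n =>
      if p.1 < q.1 then β * ∑ r, A p.1 r p.2 * A q.1 r q.2 else 0) 0 0 0

/-- The explicit-scheme matrix `M₀`: diagonal blocks `(β/α_i)I − βA_iᵀA_i` and `(1/β)I`,
`(i,j)` block `−βA_iᵀA_j` for `i < j`. -/
def M0exp {s m : ℕ} {n : Fin s → ℕ} (A : ∀ i : Fin s, Matrix (Fin m) (Fin (n i)) ℝ)
    (α : Fin s → ℝ) (β : ℝ) : Matrix (FIdx n m) (FIdx n m) ℝ :=
  Matrix.fromBlocks
    (Matrix.of fun p q : XIdx n =>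
      (if p = q then β / α p.1 else 0) +
      (if p.1 ≤ q.1 then -(β * ∑ r, A p.1 r p.2 * A q.1 r q.2) else 0))
    0 0 ((1 / β) • 1)

/-- The explicit-scheme matrix `M₁`: diagonal blocks `(β/α_i)I − βA_iᵀA_i` and `(1/β)I`,
`(i,j)` block `−2βA_iᵀA_j` for `i < j`. -/
def M1exp {s m : ℕ} {n : Fin s → ℕ} (A : ∀ i : Fin s, Matrix (Fin m) (Fin (n i)) ℝ)
    (α : Fin s → ℝ) (β : ℝ) : Matrix (FIdx n m) (FIdx n m) ℝ :=
  Matrix.fromBlocks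
    (Matrix.of fun p q : XIdx n =>
      (if p = q then β / α p.1 else 0) +
      (if p.1 ≤ q.1 then -(β * ∑ r, A p.1 r p.2 * A q.1 r q.2) else 0) +
      (if p.1 < q.1 then -(β * ∑ r, A p.1 r p.2 * A q.1 r q.2) else 0))
    0 0 ((1 / β) • 1)

/-!
`H = M₀ + M₂` is block diagonal, `H = diag(P, β⁻¹ I)` with `P = diag_i((β/α_i) I - β A_iᵀA_i)`.
Since `A_iᵀA_i ≤ ‖A_i‖² I`, the bound on `α_i` gives `P ≥ c I` for some `c > 2‖M₂‖`.
The matrix `M₂` lives in the `x`-block only: `M₂ = E B Eᵀ` with `E = [I; 0]`, so the `y`-block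
of `H` drops out,
`‖H^{-1/2} M₂ H^{-1/2}‖ ≤ ‖H^{-1/2} E‖² ‖B‖ = ‖Eᵀ H⁻¹ E‖ ‖B‖ = ‖P⁻¹‖ ‖B‖ ≤ ‖M₂‖ / c < 1/2`.
-/

open scoped MatrixOrder Matrix.Norms.L2Operator

lemma specNorm_eq_l2_opNorm {p q : Type*} [Fintype p] [Fintype q] [DecidableEq q]
    (M : Matrix p q ℝ) : specNorm M = ‖M‖ := rfl

lemma exists_lt_forall_le_of_forall_lt {ι α : Type*} [Finite ι] [LinearOrder α] [NoMaxOrder α]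
    {a : α} {f : ι → α} (h : ∀ i, a < f i) : ∃ b, a < b ∧ ∀ i, b ≤ f i := by
  cases isEmpty_or_nonempty ι
  · obtain ⟨b, hb⟩ := exists_gt a
    exact ⟨b, hb, isEmptyElim⟩
  · obtain ⟨i₀, hi₀⟩ := Finite.exists_min f
    exact ⟨f i₀, h i₀, hi₀⟩

namespace Matrix

variable {ι κ : Type*} [Fintype ι] [Fintype κ] [DecidableEq ι]

lemma PosSemidef.sqrt_eq_cfc {A : Matrix ι ι ℝ} (hA : A.PosSemidef) :
    hA.sqrt = CFC.sqrt A := by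
  rw [CFC.sqrt_eq_real_sqrt A hA.nonneg,
    cfcₙ_eq_cfc (hf := Real.continuous_sqrt.continuousOn) (hf0 := Real.sqrt_zero), hA.1.cfc_eq,
    IsHermitian.cfc, Unitary.conjStarAlgAut_apply]
  rfl

lemma PosSemidef.blockDiagonal' {o : Type*} [Fintype o] [DecidableEq o] {p : o → Type*}
    [∀ i, Fintype (p i)] [∀ i, DecidableEq (p i)] {M : ∀ i, Matrix (p i) (p i) ℝ}
    (hM : ∀ i, (M i).PosSemidef) : (Matrix.blockDiagonal' M).PosSemidef := by
  choose B hB using fun i => CStarAlgebra.nonneg_iff_eq_star_mul_self.mp (hM i).nonneg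
  have : Matrix.blockDiagonal' M = (Matrix.blockDiagonal' B)ᵀ * Matrix.blockDiagonal' B := by
    rw [blockDiagonal'_transpose, ← blockDiagonal'_mul]
    exact congrArg _ (funext hB)
  rw [this]
  exact posSemidef_conjTranspose_mul_self _

omit [Fintype ι] in
lemma posDef_of_smul_one_le {P : Matrix ι ι ℝ} {c : ℝ} (hc : 0 < c) (h : c • 1 ≤ P) :
    P.PosDef := by
  simpa using (PosDef.one.smul hc).add_posSemidef (le_iff.mp h)

lemma smul_one_le_blockDiagonal' {o : Type*} [Fintype o] [DecidableEq o] {p : o → Type*}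
    [∀ i, Fintype (p i)] [∀ i, DecidableEq (p i)] {M : ∀ i, Matrix (p i) (p i) ℝ} {c : ℝ}
    (h : ∀ i, c • 1 ≤ M i) : c • 1 ≤ blockDiagonal' M := by
  rw [le_iff, ← blockDiagonal'_one, ← blockDiagonal'_smul, ← blockDiagonal'_sub]
  exact PosSemidef.blockDiagonal' fun i => le_iff.mp (h i)

lemma transpose_mul_self_le_smul_one (A : Matrix κ ι ℝ) : Aᵀ * A ≤ (‖A‖ ^ 2) • 1 := by
  have hA : IsSelfAdjoint (Aᵀ * A) := isHermitian_conjTranspose_mul_self A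
  rw [← Algebra.algebraMap_eq_smul_one]
  refine le_algebraMap_of_spectrum_le (fun r hr => ?_) hA
  calc r ≤ ‖r‖ := Real.le_norm_self r
    _ ≤ ‖Aᵀ * A‖ := IsometricContinuousFunctionalCalculus.norm_spectrum_le _ hr hA
    _ = ‖A‖ ^ 2 := by
      rw [← conjTranspose_eq_transpose_of_trivial, l2_opNorm_conjTranspose_mul_self, sq]

lemma smul_one_le_smul_one_sub_smul_transpose_mul_self (A : Matrix κ ι ℝ) {a b c : ℝ}
    (hb : 0 ≤ b) (h : c + b * ‖A‖ ^ 2 ≤ a) : c • 1 ≤ a • 1 - b • (Aᵀ * A) := by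
  rw [le_sub_comm, ← sub_smul]
  calc b • (Aᵀ * A) ≤ b • ((‖A‖ ^ 2) • 1) :=
        smul_le_smul_of_nonneg_left (transpose_mul_self_le_smul_one A) hb
    _ = (b * ‖A‖ ^ 2) • 1 := smul_smul _ _ _
    _ ≤ (a - c) • 1 := smul_le_smul_of_nonneg_right (by linarith) zero_le_one

lemma l2_opNorm_inv_le_of_smul_one_le {P : Matrix ι ι ℝ} {c : ℝ} (hc : 0 < c)
    (h : c • 1 ≤ P) : ‖P⁻¹‖ ≤ c⁻¹ := by
  have hP := posDef_of_smul_one_le hc h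
  have hspec : ∀ x ∈ spectrum ℝ P, c ≤ x :=
    (algebraMap_le_iff_le_spectrum hP.isHermitian).mp (by rwa [Algebra.algebraMap_eq_smul_one])
  rw [← hP.isUnit.unit_spec, ← coe_units_inv, ← cfc_inv_id (R := ℝ) hP.isUnit.unit hP.isHermitian]
  refine norm_cfc_le (inv_nonneg.2 hc.le) fun x hx => ?_
  have hcx := hspec x hx
  rw [norm_inv, Real.norm_of_nonneg (hc.le.trans hcx)]
  exact inv_anti₀ hc hcx

lemma l2_opNorm_fromRows_one_zero_le : ‖fromRows (1 : Matrix ι ι ℝ) (0 : Matrix κ ι ℝ)‖ ≤ 1 := by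
  have h1 : ‖(1 : Matrix ι ι ℝ)‖ ≤ 1 := by
    rw [cstar_norm_def, map_one]
    exact ContinuousLinearMap.norm_id_le
  have h := l2_opNorm_conjTranspose_mul_self (fromRows (1 : Matrix ι ι ℝ) (0 : Matrix κ ι ℝ))
  simp only [conjTranspose_eq_transpose_of_trivial, transpose_fromRows, fromCols_mul_fromRows,
    transpose_one, transpose_zero, mul_one, Matrix.zero_mul, add_zero] at h
  nlinarith [norm_nonneg (fromRows (1 : Matrix ι ι ℝ) (0 : Matrix κ ι ℝ))]

omit [Fintype κ] in
lemma fromBlocks_zero_eq_fromRows_mul (B : Matrix ι ι ℝ) :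
    (fromBlocks B 0 0 0 : Matrix (ι ⊕ κ) (ι ⊕ κ) ℝ) =
      fromRows (1 : Matrix ι ι ℝ) (0 : Matrix κ ι ℝ) * B *
        (fromRows (1 : Matrix ι ι ℝ) (0 : Matrix κ ι ℝ))ᵀ := by
  rw [transpose_fromRows, fromRows_mul, fromRows_mul_fromCols]
  simp

lemma fromRows_transpose_mul_fromBlocks_mul (P : Matrix ι ι ℝ) (B : Matrix ι κ ℝ)
    (C : Matrix κ ι ℝ) (Q : Matrix κ κ ℝ) :
    (fromRows (1 : Matrix ι ι ℝ) (0 : Matrix κ ι ℝ))ᵀ * fromBlocks P B C Q *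
      fromRows (1 : Matrix ι ι ℝ) (0 : Matrix κ ι ℝ) = P := by
  rw [transpose_fromRows, fromCols_mul_fromBlocks, fromCols_mul_fromRows]
  simp

variable [DecidableEq κ]

lemma PosSemidef.fromBlocks_zero {P : Matrix ι ι ℝ} {Q : Matrix κ κ ℝ} (hP : P.PosSemidef)
    (hQ : Q.PosSemidef) : (fromBlocks P 0 0 Q).PosSemidef := by
  obtain ⟨B, rfl⟩ := CStarAlgebra.nonneg_iff_eq_star_mul_self.mp hP.nonneg
  obtain ⟨C, rfl⟩ := CStarAlgebra.nonneg_iff_eq_star_mul_self.mp hQ.nonneg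
  convert posSemidef_conjTranspose_mul_self (fromBlocks B 0 0 C) using 1
  simp [fromBlocks_transpose, fromBlocks_multiply, star_eq_conjTranspose]

lemma PosDef.fromBlocks_zero {P : Matrix ι ι ℝ} {Q : Matrix κ κ ℝ}
    (hP : P.PosDef) (hQ : Q.PosDef) : (fromBlocks P 0 0 Q).PosDef :=
  (hP.posSemidef.fromBlocks_zero hQ.posSemidef).posDef_iff_isUnit.mpr
    (isUnit_fromBlocks_zero₁₂.mpr ⟨hP.isUnit, hQ.isUnit⟩)

lemma l2_opNorm_sqrt_inv_mul_fromBlocks_mul_sqrt_inv_le {P : Matrix ι ι ℝ}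
    {Q : Matrix κ κ ℝ} {c : ℝ} (hc : 0 < c) (hP : c • 1 ≤ P) (hQ : Q.PosDef)
    (B : Matrix ι ι ℝ) :
    ‖CFC.sqrt (fromBlocks P 0 0 Q)⁻¹ * fromBlocks B 0 0 0 * CFC.sqrt (fromBlocks P 0 0 Q)⁻¹‖ ≤
      ‖(fromBlocks B 0 0 0 : Matrix (ι ⊕ κ) (ι ⊕ κ) ℝ)‖ / c := by
  set E := fromRows (1 : Matrix ι ι ℝ) (0 : Matrix κ ι ℝ)
  set S := CFC.sqrt (fromBlocks P 0 0 Q)⁻¹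
  have hPd := posDef_of_smul_one_le hc hP
  have hinv : (fromBlocks P 0 0 Q)⁻¹ = fromBlocks P⁻¹ 0 0 Q⁻¹ := by
    simpa using inv_fromBlocks_zero₂₁_of_isUnit_iff P 0 Q (iff_of_true hPd.isUnit hQ.isUnit)
  have hS : Sᵀ = S := (CFC.sqrt_nonneg _).isSelfAdjoint
  have hSS : Sᵀ * S = (fromBlocks P 0 0 Q)⁻¹ := by
    rw [hS]
    exact CFC.sqrt_mul_sqrt_self _ (hPd.fromBlocks_zero hQ).inv.posSemidef.nonneg
  have hSE : ‖S * E‖ ^ 2 ≤ c⁻¹ := by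
    rw [sq, ← l2_opNorm_conjTranspose_mul_self, conjTranspose_eq_transpose_of_trivial,
      transpose_mul, Matrix.mul_assoc, ← Matrix.mul_assoc Sᵀ, hSS, hinv, ← Matrix.mul_assoc,
      fromRows_transpose_mul_fromBlocks_mul]
    exact l2_opNorm_inv_le_of_smul_one_le hc hP
  have hB : ‖B‖ ≤ ‖(fromBlocks B 0 0 0 : Matrix (ι ⊕ κ) (ι ⊕ κ) ℝ)‖ := by
    have hE : ‖E‖ ≤ 1 := l2_opNorm_fromRows_one_zero_le
    have hEt : ‖Eᵀ‖ ≤ 1 := by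
      rwa [← conjTranspose_eq_transpose_of_trivial, l2_opNorm_conjTranspose]
    calc ‖B‖ = ‖Eᵀ * fromBlocks B 0 0 0 * E‖ := by rw [fromRows_transpose_mul_fromBlocks_mul]
      _ ≤ ‖Eᵀ‖ * ‖(fromBlocks B 0 0 0 : Matrix (ι ⊕ κ) (ι ⊕ κ) ℝ)‖ * ‖E‖ :=
        (l2_opNorm_mul _ _).trans (mul_le_mul_of_nonneg_right (l2_opNorm_mul _ _) (norm_nonneg _))
      _ ≤ 1 * ‖(fromBlocks B 0 0 0 : Matrix (ι ⊕ κ) (ι ⊕ κ) ℝ)‖ * 1 := by gcongr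
      _ = ‖(fromBlocks B 0 0 0 : Matrix (ι ⊕ κ) (ι ⊕ κ) ℝ)‖ := by ring
  calc ‖S * fromBlocks B 0 0 0 * S‖ = ‖(S * E) * B * (S * E)ᵀ‖ := by
        rw [fromBlocks_zero_eq_fromRows_mul, transpose_mul, hS]
        simp only [Matrix.mul_assoc]
        rfl
    _ ≤ ‖S * E‖ * ‖B‖ * ‖(S * E)ᵀ‖ :=
        (l2_opNorm_mul _ _).trans (mul_le_mul_of_nonneg_right (l2_opNorm_mul _ _) (norm_nonneg _))
    _ = ‖S * E‖ ^ 2 * ‖B‖ := by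
        rw [← conjTranspose_eq_transpose_of_trivial, l2_opNorm_conjTranspose]; ring
    _ ≤ c⁻¹ * ‖(fromBlocks B 0 0 0 : Matrix (ι ⊕ κ) (ι ⊕ κ) ℝ)‖ :=
        mul_le_mul hSE hB (norm_nonneg _) (inv_nonneg.2 hc.le)
    _ = _ := by rw [div_eq_inv_mul]

end Matrix

section ExplicitScheme

variable (A : ∀ i : Fin s, Matrix (Fin m) (Fin (n i)) ℝ) (α : Fin s → ℝ) (β : ℝ)

lemma M0exp_eq_M1exp_add_M2mat : M0exp A α β = M1exp A α β + M2mat A β := by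
  ext (p | r) (q | r') <;>
    simp only [M0exp, M1exp, M2mat, Matrix.add_apply, fromBlocks_apply₁₁, fromBlocks_apply₁₂,
      fromBlocks_apply₂₁, fromBlocks_apply₂₂, of_apply, Matrix.zero_apply, add_zero]
  split_ifs <;> ring

lemma M0exp_add_M2mat : M0exp A α β + M2mat A β =
    fromBlocks (blockDiagonal' fun i => (β / α i) • 1 - β • ((A i)ᵀ * A i)) 0 0
      ((1 / β) • 1) := by
  ext (⟨i, j⟩ | r) (⟨i', j'⟩ | r')
  · simp only [M0exp, M2mat, Matrix.add_apply, fromBlocks_apply₁₁, of_apply,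
      blockDiagonal'_apply]
    rcases lt_trichotomy i i' with h | rfl | h
    · simp [h, h.le, h.ne]
    · simp [mul_apply, one_apply, sub_eq_add_neg]
    · simp [h.ne', not_le.2 h, not_lt.2 h.le]
  all_goals simp [M0exp, M2mat]

end ExplicitScheme

/-- if `β > 0` and `0 < α_i < 1/(‖A_i‖₂² + 2‖M̃₂‖₂)` where `M̃₂ = (1/β)M₂`,
then the explicit-scheme matrices `{M₀, M₁, M₂}` satisfy Condition-M. -/
theorem explicit_matrices_conditionM {s m : ℕ} {n : Fin s → ℕ}
    (A : ∀ i : Fin s, Matrix (Fin m) (Fin (n i)) ℝ)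
    (α : Fin s → ℝ) (β : ℝ) (hβ : 0 < β)
    (hα : ∀ i, 0 < α i ∧
      α i < 1 / (specNorm (A i) ^ 2 + 2 * specNorm ((1 / β) • M2mat A β))) :
    ConditionM (M0exp A α β) (M1exp A α β) (M2mat A β) := by
  simp only [specNorm_eq_l2_opNorm, norm_smul, Real.norm_of_nonneg (one_div_pos.2 hβ).le] at hα
  have hgap : ∀ i, 2 * ‖M2mat A β‖ < β / α i - β * ‖A i‖ ^ 2 := fun i => by
    obtain ⟨hα0, hαlt⟩ := hα i
    have hsum := (lt_one_div hα0 (one_div_pos.mp (hα0.trans hαlt))).mp hαlt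
    calc 2 * ‖M2mat A β‖ = β * (2 * (1 / β * ‖M2mat A β‖)) := by field_simp
      _ < β * (1 / α i - ‖A i‖ ^ 2) := by gcongr; linarith
      _ = β / α i - β * ‖A i‖ ^ 2 := by ring
  obtain ⟨c, hM2c, hc⟩ := exists_lt_forall_le_of_forall_lt hgap
  have hc0 : 0 < c := lt_of_le_of_lt (by positivity) hM2c
  have hP : c • 1 ≤ blockDiagonal' fun i => (β / α i) • 1 - β • ((A i)ᵀ * A i) :=
    smul_one_le_blockDiagonal' fun i =>
      smul_one_le_smul_one_sub_smul_transpose_mul_self (A i) hβ.le (by linarith [hc i])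
  have hQ : ((1 / β) • 1 : Matrix (Fin m) (Fin m) ℝ).PosDef := PosDef.one.smul (by positivity)
  have hH : (M0exp A α β + M2mat A β).PosDef := by
    rw [M0exp_add_M2mat]
    exact (posDef_of_smul_one_le hc0 hP).fromBlocks_zero hQ
  refine ⟨M0exp_eq_M1exp_add_M2mat A α β, hH, ?_⟩
  rw [PosSemidef.sqrt_eq_cfc, specNorm_eq_l2_opNorm, M0exp_add_M2mat]
  calc _ ≤ ‖M2mat A β‖ / c := l2_opNorm_sqrt_inv_mul_fromBlocks_mul_sqrt_inv_le hc0 hP hQ _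
    _ < 1 / 2 := by rw [div_lt_div_iff₀ hc0 two_pos]; linarith

end
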